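/- For orthonormal a_1, …, a_T ∈ ℝ^d, γ = 1/(3√T), δ = γ/(3kT), m = T, define f† = S_{δ,A}^k f̃ where f̃(x) = max_i (a_i^T x + (1 − i/T)γ) and A = span{a_i}. Then min_{x ∈ B_d} f†(x) ≤ −1/√T + γ + kδ. -/

import Mathlib

/-!
Averaging an `L`-Lipschitz function over a ball of radius `δ` gives again an `L`-Lipschitz
function, which exceeds the original one by at most `L δ`; hence `k` smoothings of the
`1`-Lipschitz function `f̃` raise it by at most `k δ`. The point `x̂ = -(1/√T) ∑ aᵢ` is a unit
vector by orthonormality and satisfies `aᵢᵀ x̂ = -1/√T` for every `i`, so `f̃(x̂) ≤ -1/√T + γ`.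
-/

open MeasureTheory

/-- Subspace smoothing operator: average of `f` over `x + δ v` with `v` uniform in the
unit ball of the subspace `A`. -/
noncomputable def subSmooth {d : ℕ} (δ : ℝ) (A : Submodule ℝ (EuclideanSpace ℝ (Fin d)))
    (f : EuclideanSpace ℝ (Fin d) → ℝ) : EuclideanSpace ℝ (Fin d) → ℝ :=
  fun x => ⨍ v in Metric.closedBall (0 : A) 1, f (x + δ • (v : EuclideanSpace ℝ (Fin d)))

/-- `f̃(x) = max_{i ∈ [T]} (aᵢᵀx + (1 - i/T)γ)` (here `i` runs over `1,…,T`). -/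
noncomputable def ftil {d : ℕ} (T : ℕ) (γ : ℝ) (a : Fin T → EuclideanSpace ℝ (Fin d))
    (x : EuclideanSpace ℝ (Fin d)) : ℝ :=
  ⨆ i : Fin T, ((inner ℝ (a i) x : ℝ) + (1 - ((i : ℕ) + 1) / T) * γ)

section SetAverage

variable {α : Type*} [MeasurableSpace α] {μ : Measure α} {s : Set α} {f g : α → ℝ}

theorem setAverage_sub (hf : IntegrableOn f s μ) (hg : IntegrableOn g s μ) :
    ⨍ x in s, (f x - g x) ∂μ = ⨍ x in s, f x ∂μ - ⨍ x in s, g x ∂μ := by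
  simp only [setAverage_eq, integral_sub hf hg, smul_sub]

theorem setAverage_le_of_forall_le (hμ : μ s ≠ 0) (hμ₁ : μ s ≠ ⊤) (hf : IntegrableOn f s μ)
    {c : ℝ} (h : ∀ x ∈ s, f x ≤ c) : ⨍ x in s, f x ∂μ ≤ c :=
  let ⟨x, hx, hle⟩ := exists_setAverage_le hμ hμ₁ hf
  hle.trans (h x hx)

end SetAverage

theorem lipschitzWith_ciSup {ι α : Type*} [Finite ι] [PseudoMetricSpace α] {K : NNReal}
    {f : ι → α → ℝ} (hf : ∀ i, LipschitzWith K (f i)) :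
    LipschitzWith K fun x => ⨆ i, f i x := by
  cases isEmpty_or_nonempty ι
  · simpa only [Real.iSup_of_isEmpty] using LipschitzWith.const' (0 : ℝ)
  · refine LipschitzWith.of_le_add_mul K fun x y => ciSup_le fun i => ?_
    exact ((hf i).le_add_mul x y).trans
      (add_le_add_left (le_ciSup (f := fun j => f j y) (Set.finite_range _).bddAbove i) _)

section SubSmooth

variable {d : ℕ} {A : Submodule ℝ (EuclideanSpace ℝ (Fin d))} {δ : ℝ} {L : NNReal}
  {f : EuclideanSpace ℝ (Fin d) → ℝ}

theorem volume_closedBall_submodule_ne_zero : volume (Metric.closedBall (0 : A) 1) ≠ 0 :=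
  (Metric.measure_closedBall_pos volume 0 one_pos).ne'

theorem volume_closedBall_submodule_ne_top : volume (Metric.closedBall (0 : A) 1) ≠ ⊤ :=
  measure_closedBall_lt_top.ne

theorem LipschitzWith.integrableOn_closedBall_comp_add_smul (hf : LipschitzWith L f)
    (x : EuclideanSpace ℝ (Fin d)) :
    IntegrableOn (fun v : A => f (x + δ • (v : EuclideanSpace ℝ (Fin d))))
      (Metric.closedBall 0 1) :=
  (hf.continuous.comp (by fun_prop)).continuousOn.integrableOn_compact (isCompact_closedBall _ _)

theorem subSmooth_le_add (hf : LipschitzWith L f) (x : EuclideanSpace ℝ (Fin d)) :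
    subSmooth δ A f x ≤ f x + L * |δ| := by
  refine setAverage_le_of_forall_le volume_closedBall_submodule_ne_zero
    volume_closedBall_submodule_ne_top (hf.integrableOn_closedBall_comp_add_smul x) fun v hv => ?_
  have hv : ‖(v : EuclideanSpace ℝ (Fin d))‖ ≤ 1 := by simpa using hv
  have hshift : dist (x + δ • (v : EuclideanSpace ℝ (Fin d))) x ≤ |δ| := by
    simpa [dist_eq_norm, norm_smul] using mul_le_of_le_one_right (abs_nonneg δ) hv
  calc f (x + δ • (v : EuclideanSpace ℝ (Fin d)))
      ≤ f x + L * dist (x + δ • (v : EuclideanSpace ℝ (Fin d))) x := hf.le_add_mul _ _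
    _ ≤ f x + L * |δ| := by gcongr

theorem LipschitzWith.subSmooth (hf : LipschitzWith L f) : LipschitzWith L (subSmooth δ A f) := by
  refine LipschitzWith.of_le_add_mul L fun x y => sub_le_iff_le_add'.mp ?_
  rw [_root_.subSmooth, _root_.subSmooth,
    ← setAverage_sub (hf.integrableOn_closedBall_comp_add_smul x)
      (hf.integrableOn_closedBall_comp_add_smul y)]
  refine setAverage_le_of_forall_le volume_closedBall_submodule_ne_zero
    volume_closedBall_submodule_ne_top ((hf.integrableOn_closedBall_comp_add_smul x).sub
    (hf.integrableOn_closedBall_comp_add_smul y)) fun v _ => ?_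
  simpa [dist_add_right] using sub_le_iff_le_add'.mpr
    (hf.le_add_mul (x + δ • (v : EuclideanSpace ℝ (Fin d)))
      (y + δ • (v : EuclideanSpace ℝ (Fin d))))

theorem LipschitzWith.iterate_subSmooth (hf : LipschitzWith L f) (n : ℕ) :
    LipschitzWith L ((_root_.subSmooth δ A)^[n] f) := by
  induction n with
  | zero => exact hf
  | succ n ih => simpa only [Function.iterate_succ_apply'] using ih.subSmooth

theorem iterate_subSmooth_le_add (hf : LipschitzWith L f) (n : ℕ) (x : EuclideanSpace ℝ (Fin d)) :
    (subSmooth δ A)^[n] f x ≤ f x + n * (L * |δ|) := by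
  induction n with
  | zero => simp
  | succ n ih =>
    rw [Function.iterate_succ_apply']
    have := subSmooth_le_add (A := A) (δ := δ) (hf.iterate_subSmooth (A := A) (δ := δ) n) x
    push_cast
    linarith

end SubSmooth

section HardFunction

variable {d T : ℕ} {γ : ℝ} {a : Fin T → EuclideanSpace ℝ (Fin d)}

theorem ftil_lipschitzWith (ha : ∀ i, ‖a i‖ ≤ 1) : LipschitzWith 1 (ftil T γ a) := by
  refine lipschitzWith_ciSup fun i => ?_
  have hinner : LipschitzWith 1 (innerSL ℝ (a i)) := (innerSL ℝ (a i)).lipschitz.weaken <| by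
    rw [← NNReal.coe_le_coe, coe_nnnorm, innerSL_apply_norm]
    exact ha i
  simpa using hinner.add (LipschitzWith.const ((1 - ((i : ℕ) + 1) / T) * γ))

theorem ftil_le (hT : 0 < T) (hγ : 0 ≤ γ) {x : EuclideanSpace ℝ (Fin d)} {b : ℝ}
    (hx : ∀ i, inner ℝ (a i) x ≤ b) : ftil T γ a x ≤ b + γ := by
  have : Nonempty (Fin T) := ⟨⟨0, hT⟩⟩
  refine ciSup_le fun i => add_le_add (hx i) ?_
  have : (0 : ℝ) ≤ ((i : ℕ) + 1) / T := by positivity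
  nlinarith

end HardFunction

theorem Orthonormal.norm_sq_sum_smul {ι E : Type*} [Fintype ι] [NormedAddCommGroup E]
    [InnerProductSpace ℝ E] {v : ι → E} (hv : Orthonormal ℝ v) (c : ι → ℝ) :
    ‖∑ i, c i • v i‖ ^ 2 = ∑ i, c i ^ 2 := by
  rw [← real_inner_self_eq_norm_sq, hv.inner_sum]
  simp [sq]

theorem Orthonormal.exists_norm_le_one_forall_inner_eq {ι E : Type*} [Fintype ι] [Nonempty ι]
    [NormedAddCommGroup E] [InnerProductSpace ℝ E] {v : ι → E} (hv : Orthonormal ℝ v) :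
    ∃ x : E, ‖x‖ ≤ 1 ∧ ∀ i, inner ℝ (v i) x = -1 / Real.sqrt (Fintype.card ι) := by
  refine ⟨∑ i, (-1 / Real.sqrt (Fintype.card ι)) • v i, ?_, hv.inner_right_fintype _⟩
  have hcard : (0 : ℝ) < Fintype.card ι := by exact_mod_cast Fintype.card_pos
  have : ‖∑ i, (-1 / Real.sqrt (Fintype.card ι)) • v i‖ ^ 2 = 1 := by
    rw [hv.norm_sq_sum_smul, Finset.sum_const, Finset.card_univ, nsmul_eq_mul, div_pow,
      Real.sq_sqrt hcard.le]
    field_simp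
  nlinarith [norm_nonneg (∑ i, (-1 / Real.sqrt (Fintype.card ι)) • v i)]

theorem stmt18_general (d T k : ℕ) (hT : 0 < T)
    (a : Fin T → EuclideanSpace ℝ (Fin d)) (ha : Orthonormal ℝ a) :
    ∃ x ∈ Metric.closedBall (0 : EuclideanSpace ℝ (Fin d)) 1,
      (subSmooth (1 / (3 * Real.sqrt T) / (3 * k * T))
          (Submodule.span ℝ (Set.range a)))^[k] (ftil T (1 / (3 * Real.sqrt T)) a) x ≤
        -1 / Real.sqrt T + 1 / (3 * Real.sqrt T) +
          k * (1 / (3 * Real.sqrt T) / (3 * k * T)) := by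
  have : Nonempty (Fin T) := ⟨⟨0, hT⟩⟩
  obtain ⟨x, hx, hinner⟩ := ha.exists_norm_le_one_forall_inner_eq
  rw [Fintype.card_fin] at hinner
  have hγ : 0 ≤ 1 / (3 * Real.sqrt T) := by positivity
  refine ⟨x, mem_closedBall_zero_iff.mpr hx, ?_⟩
  calc _ ≤ ftil T (1 / (3 * Real.sqrt T)) a x + k * (1 * |1 / (3 * Real.sqrt T) / (3 * k * T)|) :=
        iterate_subSmooth_le_add (ftil_lipschitzWith fun i => (ha.norm_eq_one i).le) k x
    _ ≤ _ := by
      rw [one_mul, abs_of_nonneg (by positivity)]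
      gcongr
      exact ftil_le hT hγ fun i => (hinner i).le

/-- With `γ = 1/(3√T)` and `δ = γ/(3kT)`, the minimum of the hard function
`f† = S_{δ,A}^k f̃` over the unit ball is at most `-1/√T + γ + kδ`. -/
theorem stmt18 (d T k : ℕ) (hT : 0 < T) (hk : 0 < k)
    (a : Fin T → EuclideanSpace ℝ (Fin d)) (ha : Orthonormal ℝ a) :
    ∃ x ∈ Metric.closedBall (0 : EuclideanSpace ℝ (Fin d)) 1,
      (subSmooth (1 / (3 * Real.sqrt T) / (3 * k * T))
          (Submodule.span ℝ (Set.range a)))^[k] (ftil T (1 / (3 * Real.sqrt T)) a) x ≤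
        -1 / Real.sqrt T + 1 / (3 * Real.sqrt T) +
          k * (1 / (3 * Real.sqrt T) / (3 * k * T)) :=
  stmt18_general d T k hT a ha
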